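/- Let 0 < α < 1. Define on L²_α[0,1] the operators (𝓑₀ f)(s) = f(s) − (2/s²) ∫₀^s f(r) r dr, and for each integer l < 0, (𝓑_l f)(s) = f(s) − 2(1 − l) s^{l−2} ∫₀^s f(r) r^{1−l} dr. Then each of these operators is bounded on L²_α[0,1] with operator norm at most 7. -/

import Mathlib

/-!
Pointwise, `‖𝓑_l f‖ ≤ |f| + H_l |f|`, where `H_l g (s) = 2(1-l) s^{l-2} ∫₀^s r^{1-l} g(r) dr`
is a positive Hardy-type operator. Because the weight `(1-r²)^{1-α}` decreases in `r`, it can be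
moved inside the integral defining `H_l`; Cauchy–Schwarz against `r^{1/2-l}` and Tonelli then
reduce the `L²_α` bound for `H_l` to the power integrals `∫₀^s r^{1/2-l} dr` and
`∫_r^∞ s^{l-3/2} ds`, which give `‖H_l g‖² ≤ 4(1-l)² / ((3/2-l)(1/2-l)) ‖g‖² ≤ 6 ‖g‖²` for
`l ≤ 0`. Hence `‖𝓑_l f‖² ≤ 4 (1 + 6) ‖f‖² ≤ 7² ‖f‖²`, and `𝓑₀` is the case `l = 0`.
-/

open MeasureTheory Real Set ENNReal NNReal

/-- `(𝓑₀ f)(s) = f(s) - (2/s²) ∫₀^s f(r) r dr`. -/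
noncomputable def B0 (f : ℝ → ℂ) (s : ℝ) : ℂ :=
  f s - ((2 / s^2 : ℝ) : ℂ) * ∫ r in Ioo (0:ℝ) s, ((r : ℝ) : ℂ) * f r

/-- `(𝓑_l f)(s) = f(s) - 2(1-l) s^{l-2} ∫₀^s f(r) r^{1-l} dr` for `l < 0`. -/
noncomputable def Bl (l : ℤ) (f : ℝ → ℂ) (s : ℝ) : ℂ :=
  f s - ((2 * (1 - (l : ℝ)) * s ^ (l - 2) : ℝ) : ℂ) *
      ∫ r in Ioo (0:ℝ) s, ((r ^ (1 - l) : ℝ) : ℂ) * f r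

theorem lintegral_mul_sq_le {α : Type*} [MeasurableSpace α] {μ : Measure α}
    {k a b F : α → ℝ≥0∞} (ha : AEMeasurable a μ) (hb : AEMeasurable (fun x ↦ b x * F x ^ 2) μ)
    (hk : ∀ᵐ x ∂μ, k x ^ 2 ≤ a x * b x) :
    (∫⁻ x, k x * F x ∂μ) ^ 2 ≤ (∫⁻ x, a x ∂μ) * ∫⁻ x, b x * F x ^ 2 ∂μ := by
  have hsqrt : ∀ x y : ℝ≥0∞, x ^ (1 / 2 : ℝ) * y ^ (1 / 2 : ℝ) = (x * y) ^ (1 / 2 : ℝ) :=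
    fun x y ↦ (ENNReal.mul_rpow_of_nonneg x y (by norm_num)).symm
  have hroot : ∀ x : ℝ≥0∞, (x ^ (1 / 2 : ℝ)) ^ 2 = x := fun x ↦ by
    rw [← ENNReal.rpow_natCast, ← ENNReal.rpow_mul]; norm_num
  have hpt : ∀ᵐ x ∂μ, k x * F x ≤ a x ^ (1 / 2 : ℝ) * (b x * F x ^ 2) ^ (1 / 2 : ℝ) := by
    filter_upwards [hk] with x hx
    rw [← ENNReal.pow_le_pow_left_iff two_ne_zero, hsqrt, hroot, mul_pow, ← mul_assoc]
    gcongr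
  calc (∫⁻ x, k x * F x ∂μ) ^ 2
      ≤ (∫⁻ x, a x ^ (1 / 2 : ℝ) * (b x * F x ^ 2) ^ (1 / 2 : ℝ) ∂μ) ^ 2 := by
        gcongr 1; exact lintegral_mono_ae hpt
    _ ≤ ((∫⁻ x, a x ∂μ) ^ (1 / 2 : ℝ) * (∫⁻ x, b x * F x ^ 2 ∂μ) ^ (1 / 2 : ℝ)) ^ 2 := by
        gcongr 1
        exact lintegral_mul_norm_pow_le ha hb (by norm_num) (by norm_num) (by norm_num)
    _ = (∫⁻ x, a x ∂μ) * ∫⁻ x, b x * F x ^ 2 ∂μ := by rw [hsqrt, hroot]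

theorem setLIntegral_Ioo_setLIntegral_Ioo_swap {μ : Measure ℝ} [SFinite μ] {x y : ℝ}
    {f : ℝ → ℝ → ℝ≥0∞} (hf : Measurable (Function.uncurry f)) :
    ∫⁻ s in Ioo x y, ∫⁻ r in Ioo x s, f s r ∂μ ∂μ
      = ∫⁻ r in Ioo x y, ∫⁻ s in Ioo r y, f s r ∂μ ∂μ := by
  set g : ℝ → ℝ → ℝ≥0∞ := fun s r ↦ {p : ℝ × ℝ | p.2 < p.1}.indicator (Function.uncurry f) (s, r)
  have hg : Measurable (Function.uncurry g) :=
    hf.indicator (measurableSet_lt measurable_snd measurable_fst)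
  have hinner : ∀ s ∈ Ioo x y, ∫⁻ r in Ioo x s, f s r ∂μ = ∫⁻ r in Ioo x y, g s r ∂μ := by
    intro s hs
    have : g s = (Iio s).indicator (f s) := by ext r; simp [g, indicator_apply]
    rw [this, setLIntegral_indicator measurableSet_Iio, inter_comm, Ioo_inter_Iio,
      min_eq_right hs.2.le]
  have houter : ∀ r ∈ Ioo x y, ∫⁻ s in Ioo r y, f s r ∂μ = ∫⁻ s in Ioo x y, g s r ∂μ := by
    intro r hr
    have : (g · r) = (Ioi r).indicator (f · r) := by ext s; simp [g, indicator_apply]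
    rw [this, setLIntegral_indicator measurableSet_Ioi, inter_comm, Ioo_inter_Ioi,
      max_eq_right hr.1.le]
  rw [setLIntegral_congr_fun measurableSet_Ioo hinner,
    setLIntegral_congr_fun measurableSet_Ioo houter]
  exact lintegral_lintegral_swap hg.aemeasurable

theorem lintegral_Ioo_zero_rpow {s q : ℝ} (hs : 0 < s) (hq : -1 < q) :
    ∫⁻ r in Ioo 0 s, ENNReal.ofReal (r ^ q) = ENNReal.ofReal (s ^ (q + 1) / (q + 1)) := by
  have hint : IntegrableOn (fun r : ℝ ↦ r ^ q) (Ioc 0 s) :=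
    (intervalIntegrable_iff_integrableOn_Ioc_of_le hs.le).mp
      (intervalIntegral.intervalIntegrable_rpow' hq)
  have hnonneg : 0 ≤ᵐ[volume.restrict (Ioc 0 s)] fun r : ℝ ↦ r ^ q := by
    filter_upwards [self_mem_ae_restrict measurableSet_Ioc] with r hr
    exact rpow_nonneg hr.1.le q
  rw [setLIntegral_congr Ioo_ae_eq_Ioc, ← ofReal_integral_eq_lintegral_ofReal hint hnonneg,
    ← intervalIntegral.integral_of_le hs.le, integral_rpow (Or.inl hq),
    Real.zero_rpow (by linarith), sub_zero]

theorem lintegral_Ioo_rpow_le {r y q : ℝ} (hr : 0 < r) (hq : q < -1) :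
    ∫⁻ s in Ioo r y, ENNReal.ofReal (s ^ q) ≤ ENNReal.ofReal (-r ^ (q + 1) / (q + 1)) := by
  calc ∫⁻ s in Ioo r y, ENNReal.ofReal (s ^ q) ≤ ∫⁻ s in Ioi r, ENNReal.ofReal (s ^ q) :=
        lintegral_mono_set Ioo_subset_Ioi_self
    _ = ENNReal.ofReal (-r ^ (q + 1) / (q + 1)) := by
        rw [← integral_Ioi_rpow_of_lt hq hr, ofReal_integral_eq_lintegral_ofReal
          (integrableOn_Ioi_rpow_of_lt hq hr)]
        filter_upwards [self_mem_ae_restrict measurableSet_Ioi] with s hs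
        exact rpow_nonneg (hr.trans hs).le q

theorem ofReal_rpow_mul_ofReal_rpow {r : ℝ} (hr : 0 < r) (a b : ℝ) :
    ENNReal.ofReal (r ^ a) * ENNReal.ofReal (r ^ b) = ENNReal.ofReal (r ^ (a + b)) := by
  rw [← ofReal_mul (rpow_nonneg hr.le a), rpow_add hr]

noncomputable def hardyOp (l : ℝ) (G : ℝ → ℝ≥0∞) (s : ℝ) : ℝ≥0∞ :=
  ENNReal.ofReal (2 * (1 - l) * s ^ (l - 2)) *
    ∫⁻ r in Ioo 0 s, ENNReal.ofReal (r ^ (1 - l)) * G r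

theorem hardyOp_sq_mul_le {l : ℝ} (hl : l ≤ 1) {ρ : ℝ → ℝ} (hρ : AntitoneOn ρ (Ioo 0 1))
    {G : ℝ → ℝ≥0∞} (hG : Measurable G) {s : ℝ} (hs : s ∈ Ioo 0 1) :
    hardyOp l G s ^ 2 * ENNReal.ofReal (ρ s * s)
      ≤ ENNReal.ofReal ((2 * (1 - l)) ^ 2 / (3 / 2 - l)) * ENNReal.ofReal (s ^ (l - 3 / 2)) *
        ∫⁻ r in Ioo 0 s, ENNReal.ofReal (r ^ (3 / 2 - l)) * (G r ^ 2 * ENNReal.ofReal (ρ r)) := by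
  obtain ⟨hs0, hs1⟩ := hs
  have hp : 0 < 3 / 2 - l := by linarith
  set J := ∫⁻ r in Ioo 0 s, ENNReal.ofReal (r ^ (3 / 2 - l)) * G r ^ 2
  have hCS : (∫⁻ r in Ioo 0 s, ENNReal.ofReal (r ^ (1 - l)) * G r) ^ 2
      ≤ ENNReal.ofReal (s ^ (3 / 2 - l) / (3 / 2 - l)) * J := by
    have hint := lintegral_Ioo_zero_rpow hs0 (show -1 < 1 / 2 - l by linarith)
    rw [show 1 / 2 - l + 1 = 3 / 2 - l by ring] at hint
    rw [← hint]
    refine lintegral_mul_sq_le (by fun_prop) (by fun_prop) ?_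
    filter_upwards [self_mem_ae_restrict measurableSet_Ioo] with r hr
    rw [sq, ofReal_rpow_mul_ofReal_rpow hr.1, ofReal_rpow_mul_ofReal_rpow hr.1,
      show 1 - l + (1 - l) = 1 / 2 - l + (3 / 2 - l) by ring]
  have hweight : ENNReal.ofReal (ρ s) * J
      ≤ ∫⁻ r in Ioo 0 s, ENNReal.ofReal (r ^ (3 / 2 - l)) * (G r ^ 2 * ENNReal.ofReal (ρ r)) := by
    rw [← lintegral_const_mul' _ _ ofReal_ne_top]
    refine setLIntegral_mono' measurableSet_Ioo fun r hr ↦ ?_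
    have : ρ s ≤ ρ r := hρ ⟨hr.1, hr.2.trans hs1⟩ ⟨hs0, hs1⟩ hr.2.le
    calc ENNReal.ofReal (ρ s) * (ENNReal.ofReal (r ^ (3 / 2 - l)) * G r ^ 2)
        = ENNReal.ofReal (r ^ (3 / 2 - l)) * (G r ^ 2 * ENNReal.ofReal (ρ s)) := by ring
      _ ≤ _ := by gcongr
  have hscalar : ENNReal.ofReal (2 * (1 - l) * s ^ (l - 2)) ^ 2 *
      ENNReal.ofReal (s ^ (3 / 2 - l) / (3 / 2 - l)) * ENNReal.ofReal s
      = ENNReal.ofReal ((2 * (1 - l)) ^ 2 / (3 / 2 - l)) * ENNReal.ofReal (s ^ (l - 3 / 2)) := by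
    have hexp : s ^ (l - 2) * s ^ (l - 2) * s ^ (3 / 2 - l) * s = s ^ (l - 3 / 2) := by
      rw [← rpow_add hs0, ← rpow_add hs0, ← rpow_add_one hs0.ne']; ring_nf
    have hc : 0 ≤ 2 * (1 - l) * s ^ (l - 2) := by have := rpow_nonneg hs0.le (l - 2); nlinarith
    rw [← ofReal_pow hc, ← ofReal_mul (by positivity), ← ofReal_mul (by positivity),
      ← ofReal_mul (by positivity), ← hexp]
    ring_nf
  calc hardyOp l G s ^ 2 * ENNReal.ofReal (ρ s * s)
      = ENNReal.ofReal (2 * (1 - l) * s ^ (l - 2)) ^ 2 *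
          (∫⁻ r in Ioo 0 s, ENNReal.ofReal (r ^ (1 - l)) * G r) ^ 2 *
          (ENNReal.ofReal (ρ s) * ENNReal.ofReal s) := by
        rw [hardyOp, mul_pow, ofReal_mul' hs0.le]
    _ ≤ ENNReal.ofReal (2 * (1 - l) * s ^ (l - 2)) ^ 2 *
          (ENNReal.ofReal (s ^ (3 / 2 - l) / (3 / 2 - l)) * J) *
          (ENNReal.ofReal (ρ s) * ENNReal.ofReal s) := by gcongr
    _ = ENNReal.ofReal (2 * (1 - l) * s ^ (l - 2)) ^ 2 *
          ENNReal.ofReal (s ^ (3 / 2 - l) / (3 / 2 - l)) * ENNReal.ofReal s *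
          (ENNReal.ofReal (ρ s) * J) := by ring
    _ ≤ _ := by rw [hscalar]; gcongr

theorem lintegral_hardyOp_sq_le {l : ℝ} (hl : l ≤ 0) {ρ : ℝ → ℝ} (hρ : AntitoneOn ρ (Ioo 0 1))
    (hρm : Measurable ρ) {G : ℝ → ℝ≥0∞} (hG : Measurable G) :
    ∫⁻ s in Ioo 0 1, hardyOp l G s ^ 2 * ENNReal.ofReal (ρ s * s)
      ≤ 6 * ∫⁻ r in Ioo 0 1, G r ^ 2 * ENNReal.ofReal (ρ r * r) := by
  set C := ENNReal.ofReal ((2 * (1 - l)) ^ 2 / (3 / 2 - l))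
  set B : ℝ → ℝ≥0∞ := fun r ↦ ENNReal.ofReal (r ^ (3 / 2 - l)) * (G r ^ 2 * ENNReal.ofReal (ρ r))
  have hconst : (2 * (1 - l)) ^ 2 / (3 / 2 - l) * (1 / (1 / 2 - l)) ≤ 6 := by
    rw [div_mul_div_comm, mul_one, div_le_iff₀ (by nlinarith)]
    nlinarith
  have htail : ∀ r ∈ Ioo (0 : ℝ) 1, ∫⁻ s in Ioo r 1, C * ENNReal.ofReal (s ^ (l - 3 / 2)) * B r
      ≤ 6 * (G r ^ 2 * ENNReal.ofReal (ρ r * r)) := by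
    intro r hr
    have hA : ∫⁻ s in Ioo r 1, ENNReal.ofReal (s ^ (l - 3 / 2))
        ≤ ENNReal.ofReal (1 / (1 / 2 - l)) * ENNReal.ofReal (r ^ (l - 1 / 2)) := by
      refine (lintegral_Ioo_rpow_le hr.1 (by linarith)).trans_eq ?_
      rw [← ofReal_mul (one_div_pos.2 (by linarith)).le, show l - 3 / 2 + 1 = l - 1 / 2 by ring,
        neg_div, ← div_neg, neg_sub, one_div_mul_eq_div]
    calc ∫⁻ s in Ioo r 1, C * ENNReal.ofReal (s ^ (l - 3 / 2)) * B r
        = C * (∫⁻ s in Ioo r 1, ENNReal.ofReal (s ^ (l - 3 / 2))) * B r := by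
          rw [lintegral_mul_const _ (by fun_prop), lintegral_const_mul _ (by fun_prop)]
      _ ≤ C * (ENNReal.ofReal (1 / (1 / 2 - l)) * ENNReal.ofReal (r ^ (l - 1 / 2))) * B r := by
          gcongr
      _ = ENNReal.ofReal ((2 * (1 - l)) ^ 2 / (3 / 2 - l) * (1 / (1 / 2 - l))) *
            (G r ^ 2 * ENNReal.ofReal (ρ r * r)) := by
          have hpow : ENNReal.ofReal (r ^ (l - 1 / 2)) * ENNReal.ofReal (r ^ (3 / 2 - l))
              = ENNReal.ofReal r := by
            rw [ofReal_rpow_mul_ofReal_rpow hr.1, show l - 1 / 2 + (3 / 2 - l) = 1 by ring,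
              Real.rpow_one]
          rw [ofReal_mul (div_nonneg (sq_nonneg _) (by linarith)), ofReal_mul' hr.1.le, ← hpow]
          ring
      _ ≤ 6 * (G r ^ 2 * ENNReal.ofReal (ρ r * r)) := by
          gcongr
          exact (ofReal_le_ofReal hconst).trans_eq (ofReal_ofNat 6)
  calc ∫⁻ s in Ioo 0 1, hardyOp l G s ^ 2 * ENNReal.ofReal (ρ s * s)
      ≤ ∫⁻ s in Ioo 0 1, ∫⁻ r in Ioo 0 s, C * ENNReal.ofReal (s ^ (l - 3 / 2)) * B r := by
        refine setLIntegral_mono' measurableSet_Ioo fun s hs ↦ ?_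
        rw [lintegral_const_mul _ (by fun_prop)]
        exact hardyOp_sq_mul_le (by linarith) hρ hG hs
    _ = ∫⁻ r in Ioo 0 1, ∫⁻ s in Ioo r 1, C * ENNReal.ofReal (s ^ (l - 3 / 2)) * B r :=
        setLIntegral_Ioo_setLIntegral_Ioo_swap (by fun_prop)
    _ ≤ ∫⁻ r in Ioo 0 1, 6 * (G r ^ 2 * ENNReal.ofReal (ρ r * r)) :=
        setLIntegral_mono' measurableSet_Ioo htail
    _ = 6 * ∫⁻ r in Ioo 0 1, G r ^ 2 * ENNReal.ofReal (ρ r * r) :=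
        lintegral_const_mul' _ _ ofNat_ne_top

theorem B0_eq_Bl_zero (f : ℝ → ℂ) : B0 f = Bl 0 f := by
  ext s
  simp [B0, Bl, div_eq_mul_inv]

theorem enorm_Bl_le {l : ℤ} (hl : l ≤ 1) (f : ℝ → ℂ) {s : ℝ} (hs : 0 < s) :
    ‖Bl l f s‖ₑ ≤ ‖f s‖ₑ + hardyOp l (fun r ↦ ‖f r‖ₑ) s := by
  have hl' : (l : ℝ) ≤ 1 := by exact_mod_cast hl
  have hc : 0 ≤ 2 * (1 - (l : ℝ)) * s ^ (l - 2) := by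
    have := zpow_nonneg hs.le (l - 2); nlinarith
  have henorm : ∀ x : ℝ, ‖(x : ℂ)‖ₑ = ‖x‖ₑ := fun x ↦ by
    simp only [enorm_eq_nnnorm, Complex.nnnorm_real]
  refine enorm_sub_le.trans (add_le_add_right ?_ _)
  rw [hardyOp, enorm_mul, henorm, Real.enorm_eq_ofReal hc, ← Real.rpow_intCast,
    Int.cast_sub, Int.cast_ofNat]
  gcongr
  refine (enorm_integral_le_lintegral_enorm _).trans_eq ?_
  refine setLIntegral_congr_fun measurableSet_Ioo fun r hr ↦ ?_
  rw [enorm_mul, henorm, Real.enorm_eq_ofReal (zpow_nonneg hr.1.le _),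
    ← Real.rpow_intCast, Int.cast_sub, Int.cast_one]

theorem lintegral_enorm_Bl_sq_le {l : ℤ} (hl : l ≤ 0) {ρ : ℝ → ℝ} (hρ : AntitoneOn ρ (Ioo 0 1))
    (hρm : Measurable ρ) {f : ℝ → ℂ} (hf : Measurable f) :
    ∫⁻ s in Ioo 0 1, ‖Bl l f s‖ₑ ^ 2 * ENNReal.ofReal (ρ s * s)
      ≤ 28 * ∫⁻ r in Ioo 0 1, ‖f r‖ₑ ^ 2 * ENNReal.ofReal (ρ r * r) := by
  set H := hardyOp l (fun r ↦ ‖f r‖ₑ)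
  have hsq : ∀ a b : ℝ≥0∞, (a + b) ^ 2 ≤ 4 * (a ^ 2 + b ^ 2) := fun a b ↦ by
    simpa [ENNReal.rpow_two, show (2 : ℝ≥0∞) ^ 2 = 4 by norm_num] using
      ENNReal.add_rpow_le_two_rpow_mul_rpow_add_rpow a b zero_le_two
  calc ∫⁻ s in Ioo 0 1, ‖Bl l f s‖ₑ ^ 2 * ENNReal.ofReal (ρ s * s)
      ≤ ∫⁻ s in Ioo 0 1, 4 * (‖f s‖ₑ ^ 2 * ENNReal.ofReal (ρ s * s)) +
          4 * (H s ^ 2 * ENNReal.ofReal (ρ s * s)) := by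
        refine setLIntegral_mono' measurableSet_Ioo fun s hs ↦ ?_
        calc ‖Bl l f s‖ₑ ^ 2 * ENNReal.ofReal (ρ s * s)
            ≤ (‖f s‖ₑ + H s) ^ 2 * ENNReal.ofReal (ρ s * s) := by
              gcongr; exact enorm_Bl_le (by omega) f hs.1
          _ ≤ 4 * (‖f s‖ₑ ^ 2 + H s ^ 2) * ENNReal.ofReal (ρ s * s) := by gcongr; exact hsq _ _
          _ = _ := by ring
    _ = 4 * (∫⁻ r in Ioo 0 1, ‖f r‖ₑ ^ 2 * ENNReal.ofReal (ρ r * r)) +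
          4 * ∫⁻ s in Ioo 0 1, H s ^ 2 * ENNReal.ofReal (ρ s * s) := by
        rw [lintegral_add_left (by fun_prop), lintegral_const_mul' _ _ ofNat_ne_top,
          lintegral_const_mul' _ _ ofNat_ne_top]
    _ ≤ 4 * (∫⁻ r in Ioo 0 1, ‖f r‖ₑ ^ 2 * ENNReal.ofReal (ρ r * r)) +
          4 * (6 * ∫⁻ r in Ioo 0 1, ‖f r‖ₑ ^ 2 * ENNReal.ofReal (ρ r * r)) := by
        gcongr
        exact lintegral_hardyOp_sq_le (by exact_mod_cast hl) hρ hρm (by fun_prop)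
    _ = 28 * ∫⁻ r in Ioo 0 1, ‖f r‖ₑ ^ 2 * ENNReal.ofReal (ρ r * r) := by ring

theorem stmt13_general (α : ℝ) (hα1 : α < 1) :
    (∀ f : ℝ → ℂ, Measurable f →
      (∫⁻ r in Ioo (0:ℝ) 1,
          (‖f r‖₊ : ℝ≥0∞)^2 * ENNReal.ofReal ((1 - r^2) ^ (1 - α) * r)) < ⊤ →
      ∫⁻ s in Ioo (0:ℝ) 1,
          (‖B0 f s‖₊ : ℝ≥0∞)^2 * ENNReal.ofReal ((1 - s^2) ^ (1 - α) * s)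
        ≤ ENNReal.ofReal (7^2) *
          ∫⁻ r in Ioo (0:ℝ) 1,
            (‖f r‖₊ : ℝ≥0∞)^2 * ENNReal.ofReal ((1 - r^2) ^ (1 - α) * r)) ∧
    (∀ l : ℤ, l < 0 → ∀ f : ℝ → ℂ, Measurable f →
      (∫⁻ r in Ioo (0:ℝ) 1,
          (‖f r‖₊ : ℝ≥0∞)^2 * ENNReal.ofReal ((1 - r^2) ^ (1 - α) * r)) < ⊤ →
      ∫⁻ s in Ioo (0:ℝ) 1,
          (‖Bl l f s‖₊ : ℝ≥0∞)^2 * ENNReal.ofReal ((1 - s^2) ^ (1 - α) * s)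
        ≤ ENNReal.ofReal (7^2) *
          ∫⁻ r in Ioo (0:ℝ) 1,
            (‖f r‖₊ : ℝ≥0∞)^2 * ENNReal.ofReal ((1 - r^2) ^ (1 - α) * r)) := by
  have hρ : AntitoneOn (fun r : ℝ ↦ (1 - r ^ 2) ^ (1 - α)) (Ioo 0 1) := by
    intro r hr s hs hrs
    exact rpow_le_rpow (by nlinarith [hs.2, hs.1]) (by nlinarith [hr.1]) (by linarith)
  have hB : ∀ l : ℤ, l ≤ 0 → ∀ f : ℝ → ℂ, Measurable f →
      ∫⁻ s in Ioo (0:ℝ) 1, ‖Bl l f s‖ₑ ^ 2 * ENNReal.ofReal ((1 - s^2) ^ (1 - α) * s)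
        ≤ ENNReal.ofReal (7^2) *
          ∫⁻ r in Ioo (0:ℝ) 1, ‖f r‖ₑ ^ 2 * ENNReal.ofReal ((1 - r^2) ^ (1 - α) * r) :=
    fun l hl f hf ↦ (lintegral_enorm_Bl_sq_le hl hρ (by fun_prop) hf).trans (by gcongr; norm_num)
  exact ⟨fun f hf _ ↦ B0_eq_Bl_zero f ▸ hB 0 le_rfl f hf, fun l hl f hf _ ↦ hB l hl.le f hf⟩

theorem stmt13 (α : ℝ) (hα0 : 0 < α) (hα1 : α < 1) :
    (∀ f : ℝ → ℂ, Measurable f →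
      (∫⁻ r in Ioo (0:ℝ) 1,
          (‖f r‖₊ : ℝ≥0∞)^2 * ENNReal.ofReal ((1 - r^2) ^ (1 - α) * r)) < ⊤ →
      ∫⁻ s in Ioo (0:ℝ) 1,
          (‖B0 f s‖₊ : ℝ≥0∞)^2 * ENNReal.ofReal ((1 - s^2) ^ (1 - α) * s)
        ≤ ENNReal.ofReal (7^2) *
          ∫⁻ r in Ioo (0:ℝ) 1,
            (‖f r‖₊ : ℝ≥0∞)^2 * ENNReal.ofReal ((1 - r^2) ^ (1 - α) * r)) ∧
    (∀ l : ℤ, l < 0 → ∀ f : ℝ → ℂ, Measurable f →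
      (∫⁻ r in Ioo (0:ℝ) 1,
          (‖f r‖₊ : ℝ≥0∞)^2 * ENNReal.ofReal ((1 - r^2) ^ (1 - α) * r)) < ⊤ →
      ∫⁻ s in Ioo (0:ℝ) 1,
          (‖Bl l f s‖₊ : ℝ≥0∞)^2 * ENNReal.ofReal ((1 - s^2) ^ (1 - α) * s)
        ≤ ENNReal.ofReal (7^2) *
          ∫⁻ r in Ioo (0:ℝ) 1,
            (‖f r‖₊ : ℝ≥0∞)^2 * ENNReal.ofReal ((1 - r^2) ^ (1 - α) * r)) :=
  stmt13_general α hα1
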